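/- Let S be Z₂-laminated modular data with block form in which S_{0,0}=S_{0,b}=S_{b,b}=x, with row vectors a⃗ ∈ Rᵐ and d⃗ ∈ Rⁿ satisfying 2x² + a⃗·a⃗ = 1/2 and d⃗·d⃗ = 1/2. Then there exist integers M > 0 and L ≥ 0 with 2x = 1/√M, 4^L | 4M, and √M·a_i/2^{L-1} ∈ Z for all i. -/
import Mathlib


/-- The S-matrix of ℤ₂-laminated modular data, in block form
`[[x,x,a,d],[x,x,a,-d],[aᵀ,aᵀ,A,0],[dᵀ,-dᵀ,0,D]]`. -/
noncomputable def lamS (mm nn : ℕ) (x : ℝ) (a : Fin mm → ℝ) (d : Fin nn → ℝ)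
    (A : Matrix (Fin mm) (Fin mm) ℝ) (D : Matrix (Fin nn) (Fin nn) ℝ) :
    Matrix (Fin 2 ⊕ Fin mm ⊕ Fin nn) (Fin 2 ⊕ Fin mm ⊕ Fin nn) ℝ :=
  Matrix.of fun p q =>
    match p, q with
    | .inl _, .inl _ => x
    | .inl _, .inr (.inl i) => a i
    | .inl s, .inr (.inr j) => if s = 0 then d j else -d j
    | .inr (.inl i), .inl _ => a i
    | .inr (.inr j), .inl s => if s = 0 then d j else -d j
    | .inr (.inl i), .inr (.inl i') => A i i'
    | .inr (.inl _), .inr (.inr _) => 0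
    | .inr (.inr _), .inr (.inl _) => 0
    | .inr (.inr j), .inr (.inr j') => D j j'

/-- The diagonal of the T-matrix of ℤ₂-laminated modular data: `diag(r,r;s;t)`. -/
def lamT (mm nn : ℕ) (r : ℝ) (s : Fin mm → ℝ) (t : Fin nn → ℝ) :
    (Fin 2 ⊕ Fin mm ⊕ Fin nn) → ℝ :=
  Sum.elim (fun _ => r) (Sum.elim s t)

/-- Proposition 2(a): for ℤ₂-laminated unitary modular data there are integers `M > 0`
and `L ≥ 0` with `2x = 1/√M`, `4^L ∣ 4M`, and `2^(1-L)·√M·aᵢ ∈ ℤ` for all `i`. -/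
theorem stmt9 (mm nn : ℕ) (x r : ℝ) (a : Fin mm → ℝ) (d : Fin nn → ℝ)
    (A : Matrix (Fin mm) (Fin mm) ℝ) (D : Matrix (Fin nn) (Fin nn) ℝ)
    (s : Fin mm → ℝ) (t : Fin nn → ℝ)
    -- S is real symmetric and unitary
    (hSu : lamS mm nn x a d A D * lamS mm nn x a d A D = 1)
    -- T is unitary (diagonal of modulus-one entries)
    (hTu : ∀ p, |lamT mm nn r s t p| = 1)
    -- modular relation (ST)³ = S²
    (hST : (lamS mm nn x a d A D * Matrix.diagonal (lamT mm nn r s t)) ^ 3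
        = (lamS mm nn x a d A D) ^ 2)
    -- unitary modular data: the vacuum row of S is strictly positive
    (hpos : ∀ q, 0 < lamS mm nn x a d A D (Sum.inl 0) q)
    -- quantum dimensions are algebraic integers
    (hqdim : ∀ q, IsIntegral ℤ (lamS mm nn x a d A D (Sum.inl 0) q / x))
    -- Verlinde fusion coefficients are nonnegative integers
    (hfus : ∀ p q w, ∃ N : ℕ,
      ∑ u, lamS mm nn x a d A D p u * lamS mm nn x a d A D q u *
          lamS mm nn x a d A D w u / lamS mm nn x a d A D (Sum.inl 0) u = (N : ℝ))
    -- lamination: N_{b,aᵢ}^{aᵢ} ≠ 0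
    (hba : ∀ i : Fin mm,
      (∑ u, lamS mm nn x a d A D (Sum.inl 1) u *
          lamS mm nn x a d A D (Sum.inr (Sum.inl i)) u *
          lamS mm nn x a d A D (Sum.inr (Sum.inl i)) u /
          lamS mm nn x a d A D (Sum.inl 0) u) ≠ 0) :
    ∃ M : ℕ, 0 < M ∧ 2 * x = 1 / Real.sqrt M ∧
      ∃ L : ℕ, 4 ^ L ∣ 4 * M ∧
        ∀ i : Fin mm, ∃ z : ℤ,
          (2 : ℝ) ^ ((1 : ℤ) - (L : ℤ)) * Real.sqrt M * a i = (z : ℝ) := by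
  classical
  set S := lamS mm nn x a d A D with hSdef
  set dT := Matrix.diagonal (lamT mm nn r s t) with hdTdef
  have hsum : ∀ (f : Fin 2 ⊕ Fin mm ⊕ Fin nn → ℝ), ∑ u, f u =
      f (.inl 0) + f (.inl 1) + ((∑ i, f (.inr (.inl i))) + ∑ j, f (.inr (.inr j))) := by
    intro f
    rw [Fintype.sum_sum_type, Fintype.sum_sum_type, Fin.sum_univ_two, add_assoc]
  -- positivity
  have hx : 0 < x := hpos (.inl 0)
  have hd : ∀ j, 0 < d j := fun j => by simpa [hSdef, lamS] using hpos (.inr (.inr j))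
  -- unitarity rows
  have h00 : x * x + x * x + (∑ i, a i * a i + ∑ j, d j * d j) = 1 := by
    have h : (S * S) (.inl 0) (.inl 0) = 1 := by rw [hSu]; simp [Matrix.one_apply]
    rw [Matrix.mul_apply, hsum] at h
    simpa [hSdef, lamS] using h
  have h01 : x * x + x * x + (∑ i, a i * a i + ∑ j, -(d j * d j)) = 0 := by
    have h : (S * S) (.inl 0) (.inl 1) = 0 := by
      rw [hSu]; simp [Matrix.one_apply]
    rw [Matrix.mul_apply, hsum] at h
    simpa [hSdef, lamS] using h
  have hSd : ∑ j, d j * d j = 1/2 := by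
    have hns : ∑ j, -(d j * d j) = -∑ j, d j * d j := by
      rw [Finset.sum_neg_distrib]
    rw [hns] at h01
    linarith
  -- choose fusion coefficients
  choose Nf hNf using hfus
  -- 4 d_j^2 ∈ ℤ
  set Nb : Fin nn → ℕ := fun j => Nf (.inr (.inr j)) (.inr (.inr j)) (.inl 1) with hNbdef
  set N0 : Fin nn → ℕ := fun j => Nf (.inr (.inr j)) (.inr (.inr j)) (.inl 0) with hN0def
  have key1 : ∀ j, 4 * (d j * d j) = (N0 j : ℝ) + (Nb j : ℝ) := by
    intro j
    have h0 := hNf (.inr (.inr j)) (.inr (.inr j)) (.inl 0)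
    have h1 := hNf (.inr (.inr j)) (.inr (.inr j)) (.inl 1)
    rw [hsum] at h0 h1
    simp [hSdef, lamS] at h0 h1
    have hc1 : d j * d j * x / x = d j * d j := by
      rw [mul_div_assoc, div_self hx.ne', mul_one]
    have hc2 : ∀ m, D j m * D j m * d m / d m = D j m * D j m := fun m => by
      rw [mul_div_assoc, div_self (hd m).ne', mul_one]
    have hc3 : ∀ m, -(D j m * D j m * d m) / d m = -(D j m * D j m) := fun m => by
      rw [div_eq_iff (hd m).ne']; ring
    rw [hc1, Finset.sum_congr rfl (fun m _ => hc2 m)] at h0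
    rw [hc1, Finset.sum_congr rfl (fun m _ => hc3 m), Finset.sum_neg_distrib] at h1
    linarith
  -- a_i / x ∈ ℕ
  set Nd : Fin nn → Fin mm → ℕ :=
    fun j i => Nf (.inr (.inr j)) (.inr (.inr j)) (.inr (.inl i)) with hNddef
  have hNd : ∀ j i, (Nd j i : ℝ) = 2 * (d j * d j) * (a i / x) := by
    intro j i
    have h := hNf (.inr (.inr j)) (.inr (.inr j)) (.inr (.inl i))
    rw [hsum] at h
    simp [hSdef, lamS] at h
    linear_combination -h
  set E : Fin mm → ℕ := fun i => ∑ j, Nd j i with hEdef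
  have hEx : ∀ i, (E i : ℝ) = a i / x := by
    intro i
    calc (E i : ℝ) = ∑ j, (Nd j i : ℝ) := by rw [hEdef]; push_cast; rfl
    _ = ∑ j, 2 * (d j * d j) * (a i / x) := Finset.sum_congr rfl fun j _ => hNd j i
    _ = 2 * (∑ j, d j * d j) * (a i / x) := by
        rw [← Finset.sum_mul, ← Finset.mul_sum]
    _ = a i / x := by rw [hSd]; ring
  have haE : ∀ i, a i = (E i : ℝ) * x := fun i => by
    rw [hEx i, div_mul_cancel₀ _ hx.ne']
  -- global dimension
  set K : ℕ := ∑ i, (E i)^2 with hKdef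
  have hKr : (K : ℝ) = ∑ i, (E i : ℝ)^2 := by rw [hKdef]; push_cast; rfl
  have hsa : ∑ i, a i * a i = x^2 * (K : ℝ) := by
    rw [hKr, Finset.mul_sum]
    exact Finset.sum_congr rfl fun i _ => by rw [haE i]; ring
  have hx2 : x^2 * (4 + 2 * (K : ℝ)) = 1 := by
    have hhalf : x * x + x * x + x^2 * (K:ℝ) = 1/2 := by rw [← hsa]; linarith
    linear_combination 2 * hhalf
  -- T-matrix entries are ±1
  have hpm : ∀ p, lamT mm nn r s t p = 1 ∨ lamT mm nn r s t p = -1 :=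
    fun p => (abs_eq (by norm_num : (0:ℝ) ≤ 1)).mp (hTu p)
  set τ : (Fin 2 ⊕ Fin mm ⊕ Fin nn) → ℤ :=
    fun p => if lamT mm nn r s t p = 1 then 1 else -1 with hτdef
  have hτ : ∀ p, (τ p : ℝ) = lamT mm nn r s t p := by
    intro p
    by_cases h : lamT mm nn r s t p = 1
    · simp [hτdef, h]
    · have h2 := (hpm p).resolve_left h
      have h3 : τ p = -1 := if_neg h
      rw [h3, h2]; norm_num
  -- modular relation : S dT S dT = dT S
  have hT2 : dT * dT = 1 := by
    rw [hdTdef, Matrix.diagonal_mul_diagonal]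
    have : (fun p => lamT mm nn r s t p * lamT mm nn r s t p) = fun _ => (1:ℝ) :=
      funext fun p => by rw [← abs_mul_abs_self, hTu p]; norm_num
    rw [this, Matrix.diagonal_one]
  have hinv : (S*dT)*(dT*S) = 1 := by
    rw [mul_assoc, ← mul_assoc dT, hT2, one_mul, hSu]
  have h3 : (S*dT)^3 = 1 := by rw [hST, sq, hSu]
  have hkey : (S*dT)*(S*dT) = dT*S := by
    calc (S*dT)*(S*dT) = ((S*dT)*(S*dT))*((S*dT)*(dT*S)) := by rw [hinv, mul_one]
    _ = ((S*dT)*(S*dT)*(S*dT))*(dT*S) := by rw [← mul_assoc, ← mul_assoc]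
    _ = (S*dT)^3*(dT*S) := by rw [pow_succ, pow_succ, pow_one]
    _ = dT*S := by rw [h3, one_mul]
  have hent : x * r * (x * r) + x * r * (x * r) +
      (∑ i, a i * s i * (a i * r) + ∑ j, d j * t j * (d j * r)) = r * x := by
    have h := congrFun (congrFun hkey (.inl 0)) (.inl 0)
    rw [Matrix.mul_apply] at h
    simp only [hdTdef, Matrix.mul_diagonal, Matrix.diagonal_mul] at h
    rw [hsum] at h
    simpa [hSdef, lamS, lamT] using h
  -- integer abbreviations
  set ρ : ℤ := τ (.inl 0) with hρdef
  have hρ : (ρ : ℝ) = r := hτ (.inl 0)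
  have hρ2 : (ρ:ℝ) * (ρ:ℝ) = 1 := by
    have h1 : |r| = 1 := hTu (.inl 0)
    rw [hρ, ← abs_mul_abs_self, h1, one_mul]
  set B : ℤ := ∑ i, τ (.inr (.inl i)) * (E i : ℤ)^2 with hBdef
  have hB : (B : ℝ) = ∑ i, s i * (E i : ℝ)^2 := by
    rw [hBdef]; push_cast
    exact Finset.sum_congr rfl fun i _ => by rw [hτ (.inr (.inl i))]; rfl
  set C : ℤ := ∑ j, τ (.inr (.inr j)) * ((N0 j : ℤ) + (Nb j : ℤ)) with hCdef
  have hC : (C : ℝ) = ∑ j, t j * (4 * (d j * d j)) := by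
    rw [hCdef]; push_cast
    exact Finset.sum_congr rfl fun j _ => by
      rw [hτ (.inr (.inr j)), key1 j]
      rfl
  -- rewrite the entry equation
  have hsA : ∑ i, a i * s i * (a i * r) = r * (x^2 * (B:ℝ)) := by
    rw [hB, Finset.mul_sum, Finset.mul_sum]
    exact Finset.sum_congr rfl fun i _ => by rw [haE i]; ring
  have hsD : ∑ j, d j * t j * (d j * r) = r * ((C:ℝ)/4) := by
    rw [hC, Finset.sum_div, Finset.mul_sum]
    exact Finset.sum_congr rfl fun j _ => by ring
  rw [hsA, hsD, ← hρ] at hent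
  have hX : x^2 * (2*(ρ:ℝ) + (B:ℝ)) + (C:ℝ)/4 = x := by
    linear_combination (ρ:ℝ) * hent + (x - 2*x^2*(ρ:ℝ) - x^2*(B:ℝ) - (C:ℝ)/4) * hρ2
  -- x is rational
  have h4K : (0:ℝ) < 4 + 2*(K:ℝ) := by positivity
  set q : ℚ := ((2*ρ + B : ℤ) : ℚ) / ((4 + 2*(K:ℕ) : ℕ) : ℚ) + (C:ℚ)/4 with hqdef
  have hq : (q : ℝ) = x := by
    rw [hqdef]
    push_cast
    have h1 : (2*(ρ:ℝ) + (B:ℝ))/(4 + 2*(K:ℝ)) = x^2 * (2*(ρ:ℝ) + (B:ℝ)) := by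
      rw [div_eq_iff h4K.ne']
      linear_combination -(2*(ρ:ℝ) + (B:ℝ)) * hx2
    rw [h1]
    linear_combination hX
  have hqpos : (0:ℚ) < q := by
    have : (0:ℝ) < (q:ℝ) := by rw [hq]; exact hx
    exact_mod_cast this
  set p : ℚ := q⁻¹ with hpdef
  have hp : (p : ℝ) = 1/x := by rw [hpdef]; push_cast; rw [hq]; rw [one_div]
  have hpR : (p:ℝ)^2 = 4 + 2*(K:ℝ) := by
    rw [hp, div_pow, one_pow, div_eq_iff (pow_ne_zero 2 hx.ne')]
    linear_combination -hx2
  have hpQ : p^2 = 4 + 2*(K:ℚ) := by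
    have : ((p^2 : ℚ):ℝ) = ((4 + 2*(K:ℚ) : ℚ):ℝ) := by push_cast; exact hpR
    exact_mod_cast this
  -- p is an algebraic integer, hence an integer
  have hint : IsIntegral ℤ p := by
    refine ⟨Polynomial.X^2 - Polynomial.C (4 + 2*(K:ℤ)), Polynomial.monic_X_pow_sub_C _ two_ne_zero, ?_⟩
    simp only [Polynomial.eval₂_sub, Polynomial.eval₂_pow, Polynomial.eval₂_X, Polynomial.eval₂_C]
    rw [show ((algebraMap ℤ ℚ) (4 + 2*(K:ℤ))) = ((4 + 2*(K:ℤ) : ℤ) : ℚ) from rfl]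
    push_cast
    linear_combination hpQ
  obtain ⟨z, hz⟩ := IsIntegrallyClosed.isIntegral_iff.mp hint
  have hzq : (z : ℚ) = p := hz
  have hzpos : 0 < z := by
    have hppos : 0 < p := by rw [hpdef]; exact inv_pos.mpr hqpos
    exact_mod_cast hzq ▸ hppos
  have hz2 : z^2 = 4 + 2*(K:ℤ) := by
    have : ((z^2 : ℤ):ℚ) = ((4 + 2*(K:ℤ) : ℤ):ℚ) := by push_cast [hzq]; linear_combination hpQ
    exact_mod_cast this
  have heven : Even z := by
    have h2 : Even (z^2) := ⟨2 + (K:ℤ), by rw [hz2]; ring⟩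
    exact (Int.even_pow.mp h2).1
  obtain ⟨m, hm⟩ := heven
  have hmpos : 0 < m := by omega
  -- conclude
  have hzR : (z : ℝ) = 1/x := by
    rw [← hp]
    exact_mod_cast congrArg (fun w : ℚ => (w:ℝ)) hzq
  have hmR : 2 * (m:ℝ) * x = 1 := by
    have : ((m:ℝ) + (m:ℝ)) = 1/x := by rw [← hzR, hm]; push_cast; ring
    field_simp at this
    linarith
  refine ⟨(m.toNat)^2, pow_pos (by omega : 0 < m.toNat) 2, ?_, 0, one_dvd _, ?_⟩
  · have hMc : ((m.toNat^2 : ℕ) : ℝ) = (m:ℝ)^2 := by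
      have h2 : ((m.toNat : ℕ) : ℝ) = (m:ℝ) := by
        exact_mod_cast Int.toNat_of_nonneg hmpos.le
      calc ((m.toNat^2 : ℕ) : ℝ) = ((m.toNat:ℕ):ℝ)^2 := by push_cast; ring
      _ = (m:ℝ)^2 := by rw [h2]
    rw [hMc, Real.sqrt_sq (by exact_mod_cast hmpos.le)]
    rw [eq_div_iff (by exact_mod_cast hmpos.ne' : (m:ℝ) ≠ 0)]
    linear_combination hmR
  · intro i
    refine ⟨E i, ?_⟩
    have hMc : ((m.toNat^2 : ℕ) : ℝ) = (m:ℝ)^2 := by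
      have h2 : ((m.toNat : ℕ) : ℝ) = (m:ℝ) := by
        exact_mod_cast Int.toNat_of_nonneg hmpos.le
      calc ((m.toNat^2 : ℕ) : ℝ) = ((m.toNat:ℕ):ℝ)^2 := by push_cast; ring
      _ = (m:ℝ)^2 := by rw [h2]
    rw [hMc, Real.sqrt_sq (by exact_mod_cast hmpos.le)]
    rw [show ((1:ℤ) - ((0:ℕ):ℤ)) = 1 by norm_num, zpow_one, haE i]
    linear_combination (E i : ℝ) * hmR
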